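/- arXiv:1401.4154 — 5 statements merged into one kernel-verified Lean document; each statement's English description precedes it below -/
import Mathlib

section
/- Let n, m ≥ 1 and let h be a real array indexed by α ∈ {1,…,m} and i,j ∈ {1,…,n} which is symmetric in the last two indices, i.e. h_{αij} = h_{αji} for all α, i, j (equivalently, let A_1,…,A_m be symmetric real n×n matrices with entries (A_α)_{ij} = h_{αij}). Set |A|² = ∑_{α,i,j} h_{αij}². Then 2 ∑_{α,γ=1}^{m} ∑_{i,m'=1}^{n} ( ∑_{k=1}^{n} ( h_{αik} h_{γm'k} − h_{αm'k} h_{γik} ) )² + 2 ∑_{i,j,m',k=1}^{n} ( ∑_{α=1}^{m} h_{αij} h_{αm'k} )² ≤ 3 |A|⁴. Equivalently, 2 ∑_{α,γ} ‖A_α A_γ − A_γ A_α‖_F² + 2 ∑_{α,β} ( tr(A_α A_β) )² ≤ 3 ( ∑_α ‖A_α‖_F² )², where ‖·‖_F is the Frobenius norm. -/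
/-!
All three sums are unchanged when the family `A_α` is replaced by `∑ α, V r α • A α` for an
orthogonal `V`: the Gram matrix and the matrices `(⁅A_α, A_γ⁆ i j)_{α γ}` are all conjugated by
`V`. Diagonalizing the Gram matrix, we may therefore assume the `A_α` pairwise orthogonal.

In an eigenbasis of a symmetric `A` with eigenvalues `a_i`, `‖⁅A, C⁆‖² = ∑ (a_i - a_j)² c_ij²`.
Each gap satisfies `(a_i - a_j)² ≤ 2 ‖A‖²`, and since `∑ a_i² = ‖A‖²`, at most one unordered pair
`{i, j}` has `(a_i - a_j)² > 3/2 ‖A‖²`. So `‖⁅A, C⁆‖² ≤ 3/2 ‖A‖² ‖C‖² + ‖A‖² ⟪C, E⟫² / 4` for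
symmetric `C`, where `E` (with `‖E‖² ≤ 2`) is the symmetrized matrix unit of that pair. Applying
this to `⁅A_r, A_s⁆` in both orders, keeping the better of the two bounds, and controlling
`∑_s ⟪A_s, E_r⟫² / ‖A_s‖²` by Bessel's inequality gives the constant `3`.
-/

open Finset Matrix

/-- Bessel's inequality for a pairwise orthogonal family; vectors with `β v v = 0` contribute
`0` to the sum, since `x / 0 = 0`. -/
theorem LinearMap.BilinForm.sum_sq_div_le {M κ : Type*} [AddCommGroup M] [Module ℝ M]
    [Fintype κ] {β : LinearMap.BilinForm ℝ M} (hsymm : ∀ x y, β x y = β y x)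
    (hpos : ∀ x, 0 ≤ β x x) {v : κ → M} (hv : Pairwise fun r s => β (v r) (v s) = 0) (x : M) :
    ∑ r, β (v r) x ^ 2 / β (v r) (v r) ≤ β x x := by
  set c : κ → ℝ := fun r => β (v r) x / β (v r) (v r)
  have hcross : ∀ s, c s * β (v s) x = β (v s) x ^ 2 / β (v s) (v s) := fun s => by ring
  have hdiag : ∀ s, c s * ∑ r, c r * β (v r) (v s) = β (v s) x ^ 2 / β (v s) (v s) := by
    intro s
    rw [sum_eq_single s (fun r _ hrs => by rw [hv hrs, mul_zero])
      (fun h => (h (mem_univ s)).elim)]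
    by_cases h0 : β (v s) (v s) = 0
    · simp [c, h0]
    · simp only [c]; field_simp
  have hexp : β (x - ∑ r, c r • v r) (x - ∑ r, c r • v r)
      = β x x - ∑ r, β (v r) x ^ 2 / β (v r) (v r) := by
    simp only [map_sub, map_sum, map_smul, LinearMap.sub_apply, LinearMap.sum_apply,
      LinearMap.smul_apply, smul_eq_mul, hsymm x]
    simp only [mul_sub, sum_sub_distrib, hcross, hdiag]
    ring
  linarith [hpos (x - ∑ r, c r • v r)]

theorem sum_sum_comm_sum_sum {κ m n β : Type*} [Fintype κ] [Fintype m] [Fintype n]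
    [AddCommMonoid β] (f : κ → κ → m → n → β) :
    ∑ r, ∑ s, ∑ i, ∑ j, f r s i j = ∑ i, ∑ j, ∑ r, ∑ s, f r s i j :=
  calc ∑ r, ∑ s, ∑ i, ∑ j, f r s i j = ∑ r, ∑ i, ∑ j, ∑ s, f r s i j :=
        sum_congr rfl fun r _ => by rw [sum_comm]; exact sum_congr rfl fun i _ => sum_comm
    _ = _ := by rw [sum_comm]; exact sum_congr rfl fun i _ => sum_comm

theorem le_add_of_le_add_mul_mul {e K x y P Q : ℝ} (hP : 0 ≤ P) (hQ : 0 ≤ Q)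
    (h₁ : e ≤ K + x * y * P) (h₂ : e ≤ K + x * y * Q) :
    e ≤ K + (x ^ 2 * P + y ^ 2 * Q) / 2 := by
  rcases le_total P Q with h | h
  · nlinarith [mul_nonneg (sq_nonneg (x - y)) hP, mul_nonneg (sq_nonneg y) (sub_nonneg.2 h)]
  · nlinarith [mul_nonneg (sq_nonneg (x - y)) hQ, mul_nonneg (sq_nonneg x) (sub_nonneg.2 h)]

theorem two_mul_sum_add_two_mul_sum_sq_le {κ : Type*} [Fintype κ] {c g Z : κ → κ → ℝ}
    {lam : κ → ℝ}
    (hpair : ∀ r s, c r s + 3 / 2 * g r s ^ 2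
      ≤ 3 / 2 * (lam r * lam s) + (lam r ^ 2 * Z r s + lam s ^ 2 * Z s r) / 8)
    (hZ : ∀ r, ∑ s, Z r s ≤ 2) (hg : ∑ r, ∑ s, g r s ^ 2 = ∑ r, lam r ^ 2) :
    2 * ∑ r, ∑ s, c r s + 2 * ∑ r, ∑ s, g r s ^ 2 ≤ 3 * (∑ r, lam r) ^ 2 := by
  have hZ₁ : ∑ r, ∑ s, lam r ^ 2 * Z r s ≤ 2 * ∑ r, lam r ^ 2 := by
    rw [mul_sum]
    refine sum_le_sum fun r _ => ?_
    rw [← mul_sum, mul_comm 2]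
    exact mul_le_mul_of_nonneg_left (hZ r) (sq_nonneg _)
  have hZ₂ : ∑ r, ∑ s, lam s ^ 2 * Z s r ≤ 2 * ∑ r, lam r ^ 2 := by rw [sum_comm]; exact hZ₁
  have hS : ∑ r, ∑ s, lam r * lam s = (∑ r, lam r) ^ 2 := by rw [sq, sum_mul_sum]
  have hsum : ∑ r, ∑ s, c r s + 3 / 2 * ∑ r, ∑ s, g r s ^ 2
      ≤ 3 / 2 * ∑ r, ∑ s, lam r * lam s
        + (∑ r, ∑ s, lam r ^ 2 * Z r s + ∑ r, ∑ s, lam s ^ 2 * Z s r) / 8 := by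
    simpa only [sum_add_distrib, mul_sum, add_div, sum_div] using
      sum_le_sum fun r (_ : r ∈ univ) => sum_le_sum fun s (_ : s ∈ univ) => hpair r s
  linarith

section LargeGap

variable {ι : Type*} [Fintype ι] {d : ι → ℝ} {t s t' s' : ι}

def IsLargeGap (d : ι → ℝ) (t s : ι) : Prop := 3 / 2 * ∑ i, d i ^ 2 < (d t - d s) ^ 2

theorem IsLargeGap.symm (h : IsLargeGap d t s) : IsLargeGap d s t := by
  rwa [IsLargeGap, sub_sq_comm]

theorem IsLargeGap.ne (h : IsLargeGap d t s) : t ≠ s := by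
  rintro rfl
  rw [IsLargeGap, sub_self, zero_pow two_ne_zero] at h
  exact h.not_ge (by positivity)

theorem sq_sub_le_two_mul_sum_sq (d : ι → ℝ) (t s : ι) :
    (d t - d s) ^ 2 ≤ 2 * ∑ i, d i ^ 2 := by
  classical
  rcases eq_or_ne t s with rfl | hts
  · rw [sub_self, zero_pow two_ne_zero]; positivity
  have hpair : d t ^ 2 + d s ^ 2 ≤ ∑ i, d i ^ 2 := by
    simpa [sum_pair hts] using
      sum_le_univ_sum_of_nonneg (s := {t, s}) (f := fun i => d i ^ 2) fun _ => sq_nonneg _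
  nlinarith [sq_nonneg (d t + d s)]

theorem IsLargeGap.not_of_ne (h : IsLargeGap d t s) (ht : t' ≠ t) (hs : t' ≠ s) (s' : ι) :
    ¬ IsLargeGap d t' s' := by
  classical
  intro h'
  have hts := h.ne
  unfold IsLargeGap at h h'
  have hsub : ∀ u : Finset ι, ∑ i ∈ u, d i ^ 2 ≤ ∑ i, d i ^ 2 := fun _ =>
    sum_le_univ_sum_of_nonneg fun _ => sq_nonneg _
  by_cases hs't : s' = t
  · rw [hs't] at h'
    have := hsub {t', t, s}
    rw [sum_insert (by simp [ht, hs]), sum_pair hts] at this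
    nlinarith [sq_nonneg (d t' + d t + d s), sq_nonneg (d t' - d s)]
  by_cases hs's : s' = s
  · rw [hs's] at h'
    have := hsub {t', s, t}
    rw [sum_insert (by simp [ht, hs]), sum_pair hts.symm] at this
    nlinarith [sq_nonneg (d t' + d s + d t), sq_nonneg (d t' - d t)]
  by_cases hs't' : s' = t'
  · rw [hs't', sub_self, zero_pow two_ne_zero] at h'
    exact h'.not_ge (by positivity)
  · have := hsub {t', s', t, s}
    rw [sum_insert (by simp [ht, hs, Ne.symm hs't']), sum_insert (by simp [hs't, hs's]),
      sum_pair hts] at this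
    nlinarith [sq_nonneg (d t' + d s'), sq_nonneg (d t + d s)]

theorem IsLargeGap.eq_or_eq_swap (h : IsLargeGap d t s) (h' : IsLargeGap d t' s') :
    t' = t ∧ s' = s ∨ t' = s ∧ s' = t := by
  by_cases ht' : t' = t ∨ t' = s
  · by_cases hs' : s' = t ∨ s' = s
    · have := h'.ne
      rcases ht' with rfl | rfl <;> rcases hs' with rfl | rfl <;> simp_all
    · push Not at hs'
      exact (h.not_of_ne hs'.1 hs'.2 t' h'.symm).elim
  · push Not at ht'
    exact (h.not_of_ne ht'.1 ht'.2 s' h').elim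

end LargeGap

namespace Matrix

variable {ι κ m n : Type*} [Fintype ι] [Fintype κ] [Fintype m] [Fintype n]

def frobInner : LinearMap.BilinForm ℝ (Matrix m n ℝ) :=
  LinearMap.mk₂ ℝ (fun X Y => ∑ i, ∑ j, X i j * Y i j)
    (fun _ _ _ => by simp only [add_apply, add_mul, sum_add_distrib])
    (fun _ _ _ => by simp only [smul_apply, smul_eq_mul, mul_assoc, mul_sum])
    (fun _ _ _ => by simp only [add_apply, mul_add, sum_add_distrib])
    (fun _ _ _ => by simp only [smul_apply, smul_eq_mul, mul_left_comm, mul_sum])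

theorem frobInner_apply (X Y : Matrix m n ℝ) : frobInner X Y = ∑ i, ∑ j, X i j * Y i j := rfl

theorem frobInner_comm (X Y : Matrix m n ℝ) : frobInner X Y = frobInner Y X := by
  simp only [frobInner_apply, mul_comm]

theorem frobInner_self_nonneg (X : Matrix m n ℝ) : 0 ≤ frobInner X X :=
  sum_nonneg fun _ _ => sum_nonneg fun _ _ => mul_self_nonneg _

theorem frobInner_self_eq_zero {X : Matrix m n ℝ} : frobInner X X = 0 ↔ X = 0 := by
  simp [frobInner_apply, ← sq, sum_eq_zero_iff_of_nonneg, sq_nonneg, sum_nonneg, ← Matrix.ext_iff]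

theorem frobInner_eq_trace (X Y : Matrix m n ℝ) : frobInner X Y = (Xᵀ * Y).trace := by
  simp only [frobInner_apply, trace, diag, mul_apply, transpose_apply]
  exact sum_comm

theorem frobInner_single [DecidableEq m] [DecidableEq n] (i : m) (j : n) (X : Matrix m n ℝ) :
    frobInner (single i j 1) X = X i j := by
  simp [frobInner_apply, single_apply, ite_and]

theorem frobInner_diagonal [DecidableEq ι] (d : ι → ℝ) :
    frobInner (diagonal d) (diagonal d) = ∑ i, d i ^ 2 := by
  simp [frobInner_apply, diagonal_apply, sq]

theorem frobInner_transpose_mul_self (M : Matrix m n ℝ) :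
    frobInner (Mᵀ * M) (Mᵀ * M) = frobInner (M * Mᵀ) (M * Mᵀ) := by
  simp only [frobInner_eq_trace, transpose_mul, transpose_transpose, Matrix.mul_assoc]
  rw [trace_mul_comm]
  simp only [Matrix.mul_assoc]

theorem frobInner_conj [DecidableEq ι] {U : Matrix ι ι ℝ} (hU : Uᵀ * U = 1)
    (X Y : Matrix ι ι ℝ) : frobInner (U * X * Uᵀ) (U * Y * Uᵀ) = frobInner X Y := by
  simp only [frobInner_eq_trace, transpose_mul, transpose_transpose, Matrix.mul_assoc,
    ← Matrix.mul_assoc Uᵀ U, hU, Matrix.one_mul]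
  rw [trace_mul_comm]
  simp only [Matrix.mul_assoc, hU, Matrix.mul_one]

theorem trace_conj_eq [DecidableEq ι] {U : Matrix ι ι ℝ} (hU : Uᵀ * U = 1) (X : Matrix ι ι ℝ) :
    (U * X * Uᵀ).trace = X.trace := by
  rw [trace_mul_comm, ← Matrix.mul_assoc, hU, Matrix.one_mul]

theorem mul_mul_transpose_apply (U X : Matrix ι ι ℝ) (i j : ι) :
    (U * X * Uᵀ) i j = ∑ k, ∑ l, U i k * U j l * X k l := by
  simp only [mul_apply, transpose_apply, sum_mul]
  rw [sum_comm]
  exact sum_congr rfl fun _ _ => sum_congr rfl fun _ _ => by ring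

theorem lie_conj [DecidableEq ι] {U : Matrix ι ι ℝ} (hU : Uᵀ * U = 1) (X Y : Matrix ι ι ℝ) :
    ⁅U * X * Uᵀ, U * Y * Uᵀ⁆ = U * ⁅X, Y⁆ * Uᵀ := by
  simp only [Ring.lie_def, Matrix.mul_sub, Matrix.sub_mul, Matrix.mul_assoc,
    ← Matrix.mul_assoc Uᵀ U, hU, Matrix.one_mul]

theorem lie_diagonal_apply [DecidableEq ι] (d : ι → ℝ) (C : Matrix ι ι ℝ) (i j : ι) :
    ⁅diagonal d, C⁆ i j = (d i - d j) * C i j := by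
  simp only [Ring.lie_def, sub_apply, diagonal_mul, mul_diagonal]
  ring

theorem frobInner_lie_swap (X Y : Matrix ι ι ℝ) :
    frobInner ⁅Y, X⁆ ⁅Y, X⁆ = frobInner ⁅X, Y⁆ ⁅X, Y⁆ := by
  have : ⁅Y, X⁆ = -⁅X, Y⁆ := by rw [Ring.lie_def, Ring.lie_def, neg_sub]
  simp only [this, map_neg, LinearMap.neg_apply, neg_neg]

theorem IsSymm.exists_orthogonal_diagonal [DecidableEq ι] {A : Matrix ι ι ℝ} (hA : A.IsSymm) :
    ∃ (U : Matrix ι ι ℝ) (d : ι → ℝ), Uᵀ * U = 1 ∧ U * Uᵀ = 1 ∧ A = U * diagonal d * Uᵀ := by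
  have hH : A.IsHermitian := by rwa [IsHermitian, conjTranspose_eq_transpose_of_trivial]
  refine ⟨hH.eigenvectorUnitary, hH.eigenvalues, ?_, ?_, ?_⟩
  · rw [← conjTranspose_eq_transpose_of_trivial, ← star_eq_conjTranspose]
    exact Unitary.coe_star_mul_self _
  · rw [← conjTranspose_eq_transpose_of_trivial, ← star_eq_conjTranspose]
    exact Unitary.coe_mul_star_self _
  · conv_lhs => rw [hH.spectral_theorem]
    simp [Unitary.conjStarAlgAut_apply, star_eq_conjTranspose]

theorem exists_frobInner_lie_diagonal_le [DecidableEq ι] (d : ι → ℝ) :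
    ∃ E : Matrix ι ι ℝ, frobInner E E ≤ 2 ∧ ∀ C : Matrix ι ι ℝ, C.IsSymm →
      frobInner ⁅diagonal d, C⁆ ⁅diagonal d, C⁆
        ≤ 3 / 2 * (∑ i, d i ^ 2) * frobInner C C + (∑ i, d i ^ 2) * frobInner C E ^ 2 / 4 := by
  set L := ∑ i, d i ^ 2
  have hL : 0 ≤ L := by positivity
  suffices ∃ E : Matrix ι ι ℝ, frobInner E E ≤ 2 ∧
      (∀ C : Matrix ι ι ℝ, C.IsSymm → frobInner E (C ⊙ C) = frobInner C E ^ 2 / 2) ∧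
      ∀ i j, (d i - d j) ^ 2 ≤ 3 / 2 * L + L / 2 * E i j by
    obtain ⟨E, hEE, hCE, hgap⟩ := this
    refine ⟨E, hEE, fun C hC => ?_⟩
    calc frobInner ⁅diagonal d, C⁆ ⁅diagonal d, C⁆
        = ∑ i, ∑ j, (d i - d j) ^ 2 * (C i j * C i j) := by
          simp only [frobInner_apply, lie_diagonal_apply]; ring_nf
      _ ≤ ∑ i, ∑ j, (3 / 2 * L + L / 2 * E i j) * (C i j * C i j) := by
          gcongr with i _ j _
          · exact mul_self_nonneg _
          · exact hgap i j
      _ = 3 / 2 * L * frobInner C C + L / 2 * frobInner E (C ⊙ C) := by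
          simp only [frobInner_apply, hadamard_apply, add_mul, sum_add_distrib, mul_sum, mul_assoc]
      _ = _ := by rw [hCE C hC]; ring
  by_cases hgap : ∃ t s, IsLargeGap d t s
  · obtain ⟨t, s, hts⟩ := hgap
    refine ⟨single t s 1 + single s t 1, ?_, fun C hC => ?_, fun i j => ?_⟩
    · norm_num [frobInner_single, hts.ne, hts.ne.symm]
    · simp only [map_add, LinearMap.add_apply, frobInner_comm C, frobInner_single, hadamard_apply,
        hC.apply t s]
      ring
    · have hE : 0 ≤ (single t s 1 + single s t 1 : Matrix ι ι ℝ) i j := by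
        simp only [add_apply, single_apply]; positivity
      by_cases hij : IsLargeGap d i j
      · have hE1 : 1 ≤ (single t s 1 + single s t 1 : Matrix ι ι ℝ) i j := by
          rcases hts.eq_or_eq_swap hij with ⟨rfl, rfl⟩ | ⟨rfl, rfl⟩ <;>
            simp [single_apply] <;> positivity
        nlinarith [sq_sub_le_two_mul_sum_sq d i j]
      · rw [IsLargeGap, not_lt] at hij
        nlinarith
  · push Not at hgap
    refine ⟨0, by simp, fun C _ => by simp, fun i j => ?_⟩
    simpa [IsLargeGap] using hgap i j

theorem IsSymm.exists_frobInner_lie_le [DecidableEq ι] {A : Matrix ι ι ℝ} (hA : A.IsSymm) :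
    ∃ E : Matrix ι ι ℝ, frobInner E E ≤ 2 ∧ ∀ C : Matrix ι ι ℝ, C.IsSymm →
      frobInner ⁅A, C⁆ ⁅A, C⁆
        ≤ 3 / 2 * frobInner A A * frobInner C C + frobInner A A * frobInner C E ^ 2 / 4 := by
  obtain ⟨U, d, hU, hU', rfl⟩ := hA.exists_orthogonal_diagonal
  obtain ⟨E, hE, hbound⟩ := exists_frobInner_lie_diagonal_le d
  refine ⟨U * E * Uᵀ, by rwa [frobInner_conj hU], fun C hC => ?_⟩
  obtain ⟨C', hC', rfl⟩ : ∃ C' : Matrix ι ι ℝ, C'.IsSymm ∧ C = U * C' * Uᵀ := by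
    refine ⟨Uᵀ * C * U, ?_, ?_⟩
    · simp only [IsSymm, transpose_mul, transpose_transpose, hC.eq, Matrix.mul_assoc]
    · simp only [← Matrix.mul_assoc, hU', Matrix.one_mul]
      simp only [Matrix.mul_assoc, hU', Matrix.mul_one]
  simpa only [lie_conj hU, frobInner_conj hU, frobInner_diagonal] using hbound C' hC'

theorem sum_frobInner_lie_add_le_of_pairwise [DecidableEq ι] {B : κ → Matrix ι ι ℝ}
    (hB : ∀ r, (B r).IsSymm) (horth : Pairwise fun r s => frobInner (B r) (B s) = 0) :
    2 * ∑ r, ∑ s, frobInner ⁅B r, B s⁆ ⁅B r, B s⁆ + 2 * ∑ r, ∑ s, frobInner (B r) (B s) ^ 2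
      ≤ 3 * (∑ r, frobInner (B r) (B r)) ^ 2 := by
  set lam : κ → ℝ := fun r => frobInner (B r) (B r)
  choose E hE hbound using fun r => (hB r).exists_frobInner_lie_le
  replace hbound : ∀ r s, frobInner ⁅B r, B s⁆ ⁅B r, B s⁆
      ≤ 3 / 2 * (lam r * lam s) + lam r * frobInner (B s) (E r) ^ 2 / 4 := fun r s =>
    (hbound r (B s) (hB s)).trans_eq (by ring)
  set Z : κ → κ → ℝ := fun r s => frobInner (B s) (E r) ^ 2 / lam s
  have hZ : ∀ r s, 0 ≤ Z r s := fun r s => div_nonneg (sq_nonneg _) (frobInner_self_nonneg _)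
  have hBE : ∀ r s, frobInner (B s) (E r) ^ 2 = lam s * Z r s := by
    intro r s
    by_cases h0 : lam s = 0
    · simp [frobInner_self_eq_zero.1 h0, h0]
    · simp only [Z]; field_simp
  refine two_mul_sum_add_two_mul_sum_sq_le (Z := Z) (fun r s => ?_) (fun r =>
    (LinearMap.BilinForm.sum_sq_div_le frobInner_comm frobInner_self_nonneg horth (E r)).trans
      (hE r)) ?_
  · rcases eq_or_ne r s with rfl | hrs
    · have := hZ r r
      change _ + 3 / 2 * lam r ^ 2 ≤ _
      simp only [Ring.lie_def, sub_self, map_zero, zero_add]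
      nlinarith
    · have h₁ := hbound r s
      have h₂ := hbound s r
      rw [hBE] at h₁
      rw [frobInner_lie_swap, hBE] at h₂
      have := le_add_of_le_add_mul_mul (K := 3 / 2 * (lam r * lam s)) (x := lam r) (y := lam s)
        (P := Z r s / 4) (Q := Z s r / 4)
        (div_nonneg (hZ r s) (by norm_num)) (div_nonneg (hZ s r) (by norm_num))
        (h₁.trans_eq (by ring)) (h₂.trans_eq (by ring))
      rw [horth hrs]
      linarith
  · refine sum_congr rfl fun r _ => ?_
    rw [sum_eq_single r (fun s _ hsr => by rw [horth hsr.symm, zero_pow two_ne_zero])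
      (fun h => (h (mem_univ r)).elim)]

def rotate (V : Matrix κ κ ℝ) (A : κ → Matrix m n ℝ) (r : κ) : Matrix m n ℝ :=
  ∑ α, V r α • A α

def frobGram (A : κ → Matrix m n ℝ) : Matrix κ κ ℝ :=
  of fun α γ => frobInner (A α) (A γ)

theorem frobGram_rotate (V : Matrix κ κ ℝ) (A : κ → Matrix m n ℝ) :
    frobGram (rotate V A) = V * frobGram A * Vᵀ := by
  ext r s
  simp only [frobGram, rotate, of_apply, mul_mul_transpose_apply, map_sum, map_smul,
    LinearMap.sum_apply, LinearMap.smul_apply, smul_eq_mul, mul_sum]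
  rw [sum_comm]
  exact sum_congr rfl fun _ _ => sum_congr rfl fun _ _ => by ring

theorem lie_rotate_apply [DecidableEq ι] (V : Matrix κ κ ℝ) (A : κ → Matrix ι ι ℝ) (r s : κ)
    (i j : ι) :
    ⁅rotate V A r, rotate V A s⁆ i j = (V * of (fun α γ => ⁅A α, A γ⁆ i j) * Vᵀ) r s := by
  have : ⁅rotate V A r, rotate V A s⁆ = ∑ α, ∑ γ, (V r α * V s γ) • ⁅A α, A γ⁆ := by
    simp only [rotate, Ring.lie_def, sum_mul_sum, smul_mul_smul_comm, smul_sub, sum_sub_distrib]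
    rw [sum_comm (f := fun γ α => (V s γ * V r α) • (A γ * A α))]
    simp only [mul_comm (V s _)]
  simp only [this, mul_mul_transpose_apply, sum_apply, smul_apply, smul_eq_mul, of_apply]

theorem IsSymm.rotate {o : Type*} {A : κ → Matrix o o ℝ} (hA : ∀ α, (A α).IsSymm)
    (V : Matrix κ κ ℝ) (r : κ) : (rotate V A r).IsSymm := by
  simp only [Matrix.rotate, IsSymm, transpose_sum, transpose_smul, (hA _).eq]

theorem exists_rotate_pairwise_frobInner_eq_zero [DecidableEq κ] (A : κ → Matrix m n ℝ) :
    ∃ V : Matrix κ κ ℝ, Vᵀ * V = 1 ∧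
      Pairwise fun r s => frobInner (rotate V A r) (rotate V A s) = 0 := by
  have hG : (frobGram A).IsSymm := IsSymm.ext fun α γ => frobInner_comm _ _
  obtain ⟨U, d, hU, hU', hGd⟩ := hG.exists_orthogonal_diagonal
  refine ⟨Uᵀ, by rwa [transpose_transpose], fun r s hrs => ?_⟩
  have hdiag : frobGram (rotate Uᵀ A) = diagonal d := by
    rw [frobGram_rotate, hGd, transpose_transpose]
    simp only [← Matrix.mul_assoc, hU, Matrix.one_mul]
    simp only [Matrix.mul_assoc, hU, Matrix.mul_one]
  simpa only [frobGram, of_apply, diagonal_apply_ne _ hrs] using congrFun (congrFun hdiag r) s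

theorem sum_frobInner_lie_add_le [DecidableEq ι] {A : κ → Matrix ι ι ℝ}
    (hA : ∀ α, (A α).IsSymm) :
    2 * ∑ α, ∑ γ, frobInner ⁅A α, A γ⁆ ⁅A α, A γ⁆ + 2 * ∑ α, ∑ γ, frobInner (A α) (A γ) ^ 2
      ≤ 3 * (∑ α, frobInner (A α) (A α)) ^ 2 := by
  classical
  obtain ⟨V, hV, horth⟩ := exists_rotate_pairwise_frobInner_eq_zero A
  set B := rotate V A
  have hlie : ∑ r, ∑ s, frobInner ⁅B r, B s⁆ ⁅B r, B s⁆
      = ∑ α, ∑ γ, frobInner ⁅A α, A γ⁆ ⁅A α, A γ⁆ := by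
    simp only [frobInner_apply]
    rw [sum_sum_comm_sum_sum,
      sum_sum_comm_sum_sum fun α γ (i j : ι) => ⁅A α, A γ⁆ i j * ⁅A α, A γ⁆ i j]
    refine sum_congr rfl fun i _ => sum_congr rfl fun j _ => ?_
    simpa only [frobInner_apply, B, lie_rotate_apply, of_apply] using
      frobInner_conj hV (of fun α γ => ⁅A α, A γ⁆ i j) (of fun α γ => ⁅A α, A γ⁆ i j)
  have hgram : ∑ r, ∑ s, frobInner (B r) (B s) ^ 2 = ∑ α, ∑ γ, frobInner (A α) (A γ) ^ 2 := by
    have := frobInner_conj hV (frobGram A) (frobGram A)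
    rw [← frobGram_rotate] at this
    simpa only [frobInner_apply, frobGram, of_apply, sq] using this
  have hnorm : ∑ r, frobInner (B r) (B r) = ∑ α, frobInner (A α) (A α) := by
    have := trace_conj_eq hV (frobGram A)
    rw [← frobGram_rotate] at this
    simpa only [trace, diag, frobGram, of_apply] using this
  rw [← hlie, ← hgram, ← hnorm]
  exact sum_frobInner_lie_add_le_of_pairwise (IsSymm.rotate hA V) horth

end Matrix

theorem stmt_0_general (n m : ℕ)
    (h : Fin m → Fin n → Fin n → ℝ)
    (hsymm : ∀ (α : Fin m) (i j : Fin n), h α i j = h α j i) :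
    2 * (∑ α : Fin m, ∑ γ : Fin m, ∑ i : Fin n, ∑ m' : Fin n,
        (∑ k : Fin n, (h α i k * h γ m' k - h α m' k * h γ i k)) ^ 2)
      + 2 * (∑ i : Fin n, ∑ j : Fin n, ∑ m' : Fin n, ∑ k : Fin n,
        (∑ α : Fin m, h α i j * h α m' k) ^ 2)
      ≤ 3 * (∑ α : Fin m, ∑ i : Fin n, ∑ j : Fin n, (h α i j) ^ 2) ^ 2 := by
  set A : Fin m → Matrix (Fin n) (Fin n) ℝ := fun α => of (h α)
  have hA : ∀ α, (A α).IsSymm := fun α => IsSymm.ext fun i j => hsymm α j i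
  have hlie : ∀ α γ i m', ∑ k, (h α i k * h γ m' k - h α m' k * h γ i k) = ⁅A α, A γ⁆ i m' := by
    intro α γ i m'
    simp only [A, Ring.lie_def, Matrix.sub_apply, mul_apply, of_apply, ← sum_sub_distrib]
    exact sum_congr rfl fun k _ => by rw [hsymm γ m' k, hsymm α m' k, mul_comm (h α k m')]
  have hgram : ∑ i, ∑ j, ∑ m', ∑ k, (∑ α, h α i j * h α m' k) ^ 2
      = ∑ α, ∑ γ, frobInner (A α) (A γ) ^ 2 := by
    simpa only [A, frobInner_apply, mul_apply, transpose_apply, of_apply, Fintype.sum_prod_type,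
      ← sq] using frobInner_transpose_mul_self (of fun α (p : Fin n × Fin n) => h α p.1 p.2)
  have hnorm : ∑ α, ∑ i, ∑ j, h α i j ^ 2 = ∑ α, frobInner (A α) (A α) := by
    simp only [frobInner_apply, A, of_apply, sq]
  simpa only [hlie, hgram, hnorm, frobInner_apply, ← sq] using sum_frobInner_lie_add_le hA

/-- For symmetric real bilinear forms `h α` (second fundamental form
coefficients, symmetric in the last two indices), the reaction terms in the evolution
equation of `|A|²` satisfy
`2 ∑ |[A_α, A_γ]|² + 2 ∑ (tr (A_α A_β))² ≤ 3 |A|⁴`. -/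
theorem stmt_0 (n m : ℕ) (hn : 1 ≤ n) (hm : 1 ≤ m)
    (h : Fin m → Fin n → Fin n → ℝ)
    (hsymm : ∀ (α : Fin m) (i j : Fin n), h α i j = h α j i) :
    2 * (∑ α : Fin m, ∑ γ : Fin m, ∑ i : Fin n, ∑ m' : Fin n,
        (∑ k : Fin n, (h α i k * h γ m' k - h α m' k * h γ i k)) ^ 2)
      + 2 * (∑ i : Fin n, ∑ j : Fin n, ∑ m' : Fin n, ∑ k : Fin n,
        (∑ α : Fin m, h α i j * h α m' k) ^ 2)
      ≤ 3 * (∑ α : Fin m, ∑ i : Fin n, ∑ j : Fin n, (h α i j) ^ 2) ^ 2 :=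
  stmt_0_general n m h hsymm
end

section
/- Let f : ℝⁿ → ℝᵐ be a linear map with singular value decomposition as above (orthonormal bases {a_i}, {b_p}, rank r, f(a_i) = λ_i b_i for i ≤ r, λ_i = 0 for i > r). Let S((x₁,y₁),(x₂,y₂)) = ⟨x₁,x₂⟩ − ⟨y₁,y₂⟩ on ℝⁿ × ℝᵐ, let e_i = (a_i, λ_i b_i)/√(1+λ_i²) be the orthonormal basis of the graph Γ(f), and let ν_p (ν_p = (−λ_p a_p, b_p)/√(1+λ_p²) for p ≤ r, ν_p = (0, b_p) for p > r) be the orthonormal basis of Γ(f)^⊥. Then the matrix of S in the basis (e_1,…,e_n, ν_1,…,ν_m) has the block form: S(e_i, e_j) = ((1−λ_i²)/(1+λ_i²)) δ_{ij}; S(e_i, ν_p) = (−2λ_i/(1+λ_i²)) δ_{ip} for i ≤ n, p ≤ r, and S(e_i, ν_p) = 0 for p > r; S(ν_p, ν_q) = −((1−λ_p²)/(1+λ_p²)) δ_{pq}. -/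
/-!
Each basis vector is a normalised pair `c • (x, y)` with `c = (1 + λ²)^{-1/2}`, so every entry
of the matrix of `S` is `c c' (⟨x, x'⟩ - ⟨y, y'⟩)`. The first components come from the
orthonormal `a`, the second from the orthonormal `b`, both indexed by `ℕ` after extending by
zero; since `λ_k = 0` beyond the rank, the extension never shows, and each entry reduces to
`c² (1 - λ²)`, `-2 c² λ` or `c² (λ² - 1)` on the diagonal and to `0` off it.
-/

open RealInnerProductSpace

def zeroExtend {n : ℕ} {α : Type*} [Zero α] (v : Fin n → α) (k : ℕ) : α :=
  if h : k < n then v ⟨k, h⟩ else 0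

variable {E F : Type*} [NormedAddCommGroup E] [InnerProductSpace ℝ E]
  [NormedAddCommGroup F] [InnerProductSpace ℝ F]

def splitForm (v w : WithLp 2 (E × F)) : ℝ :=
  ⟪(WithLp.equiv 2 (E × F) v).1, (WithLp.equiv 2 (E × F) w).1⟫
    - ⟪(WithLp.equiv 2 (E × F) v).2, (WithLp.equiv 2 (E × F) w).2⟫

theorem splitForm_smul_smul (c d : ℝ) (x₁ x₂ : E) (y₁ y₂ : F) :
    splitForm (c • (WithLp.equiv 2 (E × F)).symm (x₁, y₁))
        (d • (WithLp.equiv 2 (E × F)).symm (x₂, y₂)) =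
      c * d * (⟪x₁, x₂⟫ - ⟪y₁, y₂⟫) := by
  simp only [splitForm, WithLp.equiv_apply, WithLp.equiv_symm_apply, WithLp.ofLp_smul,
    Prod.smul_fst, Prod.smul_snd, real_inner_smul_left, real_inner_smul_right]
  ring

theorem inv_sqrt_one_add_sq_mul_self (t : ℝ) :
    (√(1 + t ^ 2))⁻¹ * (√(1 + t ^ 2))⁻¹ = (1 + t ^ 2)⁻¹ := by
  rw [← mul_inv, Real.mul_self_sqrt (by positivity)]

namespace Orthonormal

variable {n : ℕ} {v : Fin n → E}

theorem inner_zeroExtend_right (hv : Orthonormal ℝ v) (i : Fin n) (k : ℕ) :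
    ⟪v i, zeroExtend v k⟫ = if (i : ℕ) = k then 1 else 0 := by
  by_cases hk : k < n
  · simp only [zeroExtend, dif_pos hk, orthonormal_iff_ite.mp hv, ← Fin.val_inj]
  · have hik : (i : ℕ) ≠ k := by omega
    simp [zeroExtend, hk, hik]

theorem inner_zeroExtend_left (hv : Orthonormal ℝ v) (k : ℕ) (i : Fin n) :
    ⟪zeroExtend v k, v i⟫ = if k = i then 1 else 0 := by
  rw [real_inner_comm, hv.inner_zeroExtend_right]
  simp only [eq_comm]

theorem inner_smul_zeroExtend_smul_zeroExtend (hv : Orthonormal ℝ v) {lam : ℕ → ℝ}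
    (hlam : ∀ k, n ≤ k → lam k = 0) (k l : ℕ) :
    ⟪lam k • zeroExtend v k, lam l • zeroExtend v l⟫ = lam k ^ 2 * if k = l then 1 else 0 := by
  by_cases hk : k < n
  · rw [real_inner_smul_left, real_inner_smul_right, zeroExtend, dif_pos hk,
      hv.inner_zeroExtend_right]
    split_ifs with hkl
    · subst hkl; ring
    · ring
  · simp [hlam k (not_lt.mp hk)]

end Orthonormal

theorem map_apply_eq_smul_zeroExtend {n m r : ℕ} (hrm : r ≤ m) {f : E →ₗ[ℝ] F}
    {a : Fin n → E} {b : Fin m → F} {lam : ℕ → ℝ} (hlamzero : ∀ i, r ≤ i → lam i = 0)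
    (hf1 : ∀ i : Fin n, (hi : (i : ℕ) < r) → f (a i) = lam i • b ⟨i, lt_of_lt_of_le hi hrm⟩)
    (hf2 : ∀ i : Fin n, r ≤ (i : ℕ) → f (a i) = 0) (i : Fin n) :
    f (a i) = lam i • zeroExtend b i := by
  by_cases hi : (i : ℕ) < r
  · rw [hf1 i hi, zeroExtend, dif_pos (hi.trans_le hrm)]
  · rw [hf2 i (not_lt.mp hi), hlamzero i (not_lt.mp hi), zero_smul]

theorem stmt_3_general (n m r : ℕ) (hrn : r ≤ n) (hrm : r ≤ m)
    (f : EuclideanSpace ℝ (Fin n) →ₗ[ℝ] EuclideanSpace ℝ (Fin m))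
    (a : Fin n → EuclideanSpace ℝ (Fin n))
    (b : Fin m → EuclideanSpace ℝ (Fin m))
    (ha : Orthonormal ℝ a) (hb : Orthonormal ℝ b)
    (lam : ℕ → ℝ)
    (hlamzero : ∀ i, r ≤ i → lam i = 0)
    (hf1 : ∀ i : Fin n, (hi : (i : ℕ) < r) →
      f (a i) = lam i • b ⟨i, lt_of_lt_of_le hi hrm⟩)
    (hf2 : ∀ i : Fin n, r ≤ (i : ℕ) → f (a i) = 0)
    (e : Fin n → WithLp 2 (EuclideanSpace ℝ (Fin n) × EuclideanSpace ℝ (Fin m)))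
    (he : ∀ i, e i = (Real.sqrt (1 + lam i ^ 2))⁻¹ •
      (WithLp.equiv 2 (EuclideanSpace ℝ (Fin n) × EuclideanSpace ℝ (Fin m))).symm
        (a i, f (a i)))
    (ν : Fin m → WithLp 2 (EuclideanSpace ℝ (Fin n) × EuclideanSpace ℝ (Fin m)))
    (hν : ∀ p, ν p = (Real.sqrt (1 + lam p ^ 2))⁻¹ •
      (WithLp.equiv 2 (EuclideanSpace ℝ (Fin n) × EuclideanSpace ℝ (Fin m))).symm
        (-(lam p) • (if hp : (p : ℕ) < n then a ⟨p, hp⟩ else 0), b p))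
    (S : WithLp 2 (EuclideanSpace ℝ (Fin n) × EuclideanSpace ℝ (Fin m)) →
      WithLp 2 (EuclideanSpace ℝ (Fin n) × EuclideanSpace ℝ (Fin m)) → ℝ)
    (hS : ∀ v w, S v w =
      (inner ℝ ((WithLp.equiv 2 (EuclideanSpace ℝ (Fin n) × EuclideanSpace ℝ (Fin m))) v).1
        ((WithLp.equiv 2 (EuclideanSpace ℝ (Fin n) × EuclideanSpace ℝ (Fin m))) w).1 : ℝ)
      - (inner ℝ ((WithLp.equiv 2 (EuclideanSpace ℝ (Fin n) × EuclideanSpace ℝ (Fin m))) v).2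
        ((WithLp.equiv 2 (EuclideanSpace ℝ (Fin n) × EuclideanSpace ℝ (Fin m))) w).2 : ℝ)) :
    (∀ i j : Fin n, S (e i) (e j) =
      ((1 - lam i ^ 2) / (1 + lam i ^ 2)) * (if i = j then 1 else 0)) ∧
    (∀ (i : Fin n) (p : Fin m), (p : ℕ) < r →
      S (e i) (ν p) =
        (-2 * lam i / (1 + lam i ^ 2)) * (if (i : ℕ) = (p : ℕ) then 1 else 0)) ∧
    (∀ (i : Fin n) (p : Fin m), r ≤ (p : ℕ) → S (e i) (ν p) = 0) ∧
    (∀ p q : Fin m, S (ν p) (ν q) =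
      -((1 - lam p ^ 2) / (1 + lam p ^ 2)) * (if p = q then 1 else 0)) := by
  obtain rfl : S = splitForm := funext₂ hS
  have hfa := map_apply_eq_smul_zeroExtend hrm hlamzero hf1 hf2
  have hν' : ∀ p, ν p = (√(1 + lam p ^ 2))⁻¹ • (WithLp.equiv 2 _).symm
      (-(lam p) • zeroExtend a p, b p) := hν
  have hgraph_normal : ∀ i p, splitForm (e i) (ν p) =
      (-2 * lam i / (1 + lam i ^ 2)) * if (i : ℕ) = (p : ℕ) then 1 else 0 := by
    intro i p
    rw [he, hν', splitForm_smul_smul, hfa, real_inner_smul_right, real_inner_smul_left,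
      ha.inner_zeroExtend_right, hb.inner_zeroExtend_left]
    split_ifs with hip
    · rw [← hip, inv_sqrt_one_add_sq_mul_self]; ring
    · ring
  refine ⟨fun i j => ?_, fun i p _ => hgraph_normal i p, fun i p hp => ?_, fun p q => ?_⟩
  · rw [he, he, splitForm_smul_smul, hfa, hfa, orthonormal_iff_ite.mp ha,
      hb.inner_smul_zeroExtend_smul_zeroExtend fun k hk => hlamzero k (hrm.trans hk)]
    simp only [Fin.val_inj]
    split_ifs with hij
    · rw [hij, inv_sqrt_one_add_sq_mul_self]; ring
    · ring
  · rw [hgraph_normal]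
    split_ifs with hip
    · rw [hip, hlamzero p hp]; ring
    · ring
  · rw [hν', hν', splitForm_smul_smul, neg_smul, neg_smul, inner_neg_neg,
      ha.inner_smul_zeroExtend_smul_zeroExtend fun k hk => hlamzero k (hrn.trans hk),
      orthonormal_iff_ite.mp hb]
    simp only [Fin.val_inj]
    split_ifs with hpq
    · rw [hpq, inv_sqrt_one_add_sq_mul_self]; ring
    · ring

/-- With a singular value decomposition of `f : ℝⁿ → ℝᵐ` as in
Statement 1, the block form of `S((x₁,y₁),(x₂,y₂)) = ⟨x₁,x₂⟩ − ⟨y₁,y₂⟩` in the adapted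
orthonormal basis `(e₁,…,e_n, ν₁,…,ν_m)` of `ℝⁿ × ℝᵐ` is:
`S(e i, e j) = ((1−λ_i²)/(1+λ_i²)) δ_{ij}`,
`S(e i, ν p) = (−2λ_i/(1+λ_i²)) δ_{ip}` for `p < r` and `= 0` for `p ≥ r`,
`S(ν p, ν q) = −((1−λ_p²)/(1+λ_p²)) δ_{pq}`. -/
theorem stmt_3 (n m r : ℕ) (hn : 1 ≤ n) (hm : 1 ≤ m) (hrn : r ≤ n) (hrm : r ≤ m)
    (f : EuclideanSpace ℝ (Fin n) →ₗ[ℝ] EuclideanSpace ℝ (Fin m))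
    (hrank : Module.finrank ℝ (LinearMap.range f) = r)
    (a : Fin n → EuclideanSpace ℝ (Fin n))
    (b : Fin m → EuclideanSpace ℝ (Fin m))
    (ha : Orthonormal ℝ a) (ha' : Submodule.span ℝ (Set.range a) = ⊤)
    (hb : Orthonormal ℝ b) (hb' : Submodule.span ℝ (Set.range b) = ⊤)
    (lam : ℕ → ℝ)
    (hlampos : ∀ i, i < r → 0 < lam i)
    (hlamzero : ∀ i, r ≤ i → lam i = 0)
    (hf1 : ∀ i : Fin n, (hi : (i : ℕ) < r) →
      f (a i) = lam i • b ⟨i, lt_of_lt_of_le hi hrm⟩)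
    (hf2 : ∀ i : Fin n, r ≤ (i : ℕ) → f (a i) = 0)
    (e : Fin n → WithLp 2 (EuclideanSpace ℝ (Fin n) × EuclideanSpace ℝ (Fin m)))
    (he : ∀ i, e i = (Real.sqrt (1 + lam i ^ 2))⁻¹ •
      (WithLp.equiv 2 (EuclideanSpace ℝ (Fin n) × EuclideanSpace ℝ (Fin m))).symm
        (a i, f (a i)))
    (ν : Fin m → WithLp 2 (EuclideanSpace ℝ (Fin n) × EuclideanSpace ℝ (Fin m)))
    (hν : ∀ p, ν p = (Real.sqrt (1 + lam p ^ 2))⁻¹ •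
      (WithLp.equiv 2 (EuclideanSpace ℝ (Fin n) × EuclideanSpace ℝ (Fin m))).symm
        (-(lam p) • (if hp : (p : ℕ) < n then a ⟨p, hp⟩ else 0), b p))
    (S : WithLp 2 (EuclideanSpace ℝ (Fin n) × EuclideanSpace ℝ (Fin m)) →
      WithLp 2 (EuclideanSpace ℝ (Fin n) × EuclideanSpace ℝ (Fin m)) → ℝ)
    (hS : ∀ v w, S v w =
      (inner ℝ ((WithLp.equiv 2 (EuclideanSpace ℝ (Fin n) × EuclideanSpace ℝ (Fin m))) v).1
        ((WithLp.equiv 2 (EuclideanSpace ℝ (Fin n) × EuclideanSpace ℝ (Fin m))) w).1 : ℝ)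
      - (inner ℝ ((WithLp.equiv 2 (EuclideanSpace ℝ (Fin n) × EuclideanSpace ℝ (Fin m))) v).2
        ((WithLp.equiv 2 (EuclideanSpace ℝ (Fin n) × EuclideanSpace ℝ (Fin m))) w).2 : ℝ)) :
    (∀ i j : Fin n, S (e i) (e j) =
      ((1 - lam i ^ 2) / (1 + lam i ^ 2)) * (if i = j then 1 else 0)) ∧
    (∀ (i : Fin n) (p : Fin m), (p : ℕ) < r →
      S (e i) (ν p) =
        (-2 * lam i / (1 + lam i ^ 2)) * (if (i : ℕ) = (p : ℕ) then 1 else 0)) ∧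
    (∀ (i : Fin n) (p : Fin m), r ≤ (p : ℕ) → S (e i) (ν p) = 0) ∧
    (∀ p q : Fin m, S (ν p) (ν q) =
      -((1 - lam p ^ 2) / (1 + lam p ^ 2)) * (if p = q then 1 else 0)) :=
  stmt_3_general n m r hrn hrm f a b ha hb lam hlamzero hf1 hf2 e he ν hν S hS
end

section
/- Let λ₁, λ₂ be real numbers and set S₁₁ = (1−λ₁²)/(1+λ₁²), S₂₂ = (1−λ₂²)/(1+λ₂²), T₁₁ = 2λ₁/(1+λ₁²), T₂₂ = 2λ₂/(1+λ₂²) (so that S₁₁² + T₁₁² = S₂₂² + T₂₂² = 1). Then for all real numbers h_{3c1}, h_{4c2} (c = 1, 2): 4(S₁₁ + S₂₂)(S₁₁ − S₂₂) ∑_{c=1}^{2} (h_{3c1}² − h_{4c2}²) + 4 ∑_{c=1}^{2} (T₁₁ h_{3c1} + T₂₂ h_{4c2})² = 4 ∑_{c=1}^{2} (T₁₁ h_{4c2} + T₂₂ h_{3c1})². -/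
/-! The point `((1 - λ²)/(1 + λ²), 2λ/(1 + λ²))` lies on the unit circle, so `S₁₁² + T₁₁² = S₂₂² + T₂₂²`,
i.e. `S₁₁² - S₂₂² = T₂₂² - T₁₁²`. With this, the identity holds already summand by summand:
`(T₁₁ b + T₂₂ a)² - (T₁₁ a + T₂₂ b)² = (T₂₂² - T₁₁²)(a² - b²)`. -/

theorem one_sub_sq_div_one_add_sq_sq_add_two_mul_div_one_add_sq_sq {K : Type*} [Field K] {x : K}
    (hx : 1 + x ^ 2 ≠ 0) : ((1 - x ^ 2) / (1 + x ^ 2)) ^ 2 + (2 * x / (1 + x ^ 2)) ^ 2 = 1 := by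
  field_simp
  ring

theorem add_sq_swap_of_sq_add_sq_eq {R : Type*} [CommRing R] {s₁ s₂ t₁ t₂ : R}
    (h : s₁ ^ 2 + t₁ ^ 2 = s₂ ^ 2 + t₂ ^ 2) (a b : R) :
    (s₁ + s₂) * (s₁ - s₂) * (a ^ 2 - b ^ 2) + (t₁ * a + t₂ * b) ^ 2 = (t₁ * b + t₂ * a) ^ 2 := by
  linear_combination (a ^ 2 - b ^ 2) * h

theorem sum_add_sq_swap_of_sq_add_sq_eq {R ι : Type*} [CommRing R] (s : Finset ι)
    {s₁ s₂ t₁ t₂ : R} (h : s₁ ^ 2 + t₁ ^ 2 = s₂ ^ 2 + t₂ ^ 2) (a b : ι → R) :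
    (s₁ + s₂) * (s₁ - s₂) * ∑ c ∈ s, (a c ^ 2 - b c ^ 2) + ∑ c ∈ s, (t₁ * a c + t₂ * b c) ^ 2
      = ∑ c ∈ s, (t₁ * b c + t₂ * a c) ^ 2 := by
  rw [Finset.mul_sum, ← Finset.sum_add_distrib]
  exact Finset.sum_congr rfl fun c _ => add_sq_swap_of_sq_add_sq_eq h (a c) (b c)

/-- The key algebraic identity (equation (3.17) of the paper): with
`S₁₁ = (1−λ₁²)/(1+λ₁²)`, `S₂₂ = (1−λ₂²)/(1+λ₂²)`, `T₁₁ = 2λ₁/(1+λ₁²)`,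
`T₂₂ = 2λ₂/(1+λ₂²)` (so `S₁₁² + T₁₁² = S₂₂² + T₂₂² = 1`), for all real `h_{3c1}, h_{4c2}`:
`4(S₁₁+S₂₂)(S₁₁−S₂₂)∑_c(h_{3c1}²−h_{4c2}²) + 4∑_c(T₁₁h_{3c1}+T₂₂h_{4c2})²
  = 4∑_c(T₁₁h_{4c2}+T₂₂h_{3c1})²`. -/
theorem stmt_5 (l1 l2 : ℝ) (h3 h4 : Fin 2 → ℝ)
    (S11 S22 T11 T22 : ℝ)
    (hS11 : S11 = (1 - l1 ^ 2) / (1 + l1 ^ 2))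
    (hS22 : S22 = (1 - l2 ^ 2) / (1 + l2 ^ 2))
    (hT11 : T11 = 2 * l1 / (1 + l1 ^ 2))
    (hT22 : T22 = 2 * l2 / (1 + l2 ^ 2)) :
    S11 ^ 2 + T11 ^ 2 = 1 ∧ S22 ^ 2 + T22 ^ 2 = 1 ∧
    4 * (S11 + S22) * (S11 - S22) * (∑ c : Fin 2, ((h3 c) ^ 2 - (h4 c) ^ 2))
      + 4 * ∑ c : Fin 2, (T11 * h3 c + T22 * h4 c) ^ 2
    = 4 * ∑ c : Fin 2, (T11 * h4 c + T22 * h3 c) ^ 2 := by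
  have h1 : S11 ^ 2 + T11 ^ 2 = 1 := by
    subst hS11 hT11
    exact one_sub_sq_div_one_add_sq_sq_add_two_mul_div_one_add_sq_sq (by positivity)
  have h2 : S22 ^ 2 + T22 ^ 2 = 1 := by
    subst hS22 hT22
    exact one_sub_sq_div_one_add_sq_sq_add_two_mul_div_one_add_sq_sq (by positivity)
  refine ⟨h1, h2, ?_⟩
  rw [mul_assoc 4, mul_assoc 4, ← mul_add,
    sum_add_sq_swap_of_sq_add_sq_eq _ (h1.trans h2.symm) h3 h4]
end

section
/- Let h_{αij} be real numbers for α ∈ {3,4} and i, j ∈ {1,2}, symmetric in the last two indices (h_{αij} = h_{αji}), and satisfying the Lagrangian symmetry h_{3c2} = h_{4c1} for c = 1, 2. Set H_α = h_{α11} + h_{α22}, |H|² = H₃² + H₄², and |A|² = ∑_{α∈{3,4}} ∑_{i,j∈{1,2}} h_{αij}². Then ∑_{c=1}^{2} (h_{3c1}² − h_{4c2}²) = (h_{311} − h_{322}) H₃ + (h_{411} − h_{422}) H₄, and consequently | ∑_{c=1}^{2} (h_{3c1}² − h_{4c2}²) | ≤ |h_{311} − h_{322}| · |H₃| + |h_{411}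 − h_{422}| · |H₄| ≤ 2√2 · |A| · |H|. -/
/-!
The Lagrangian symmetry together with the symmetry of each `h α` gives `h₃₂₁ = h₄₁₁` and
`h₄₁₂ = h₃₂₂`, so the off-diagonal terms of the sum trade places and it becomes
`(h₃₁₁² − h₃₂₂²) + (h₄₁₁² − h₄₂₂²)`, a sum of two differences of squares. Each factor
`|h_α11 − h_α22|` is at most `√2 · √(h_α11² + h_α22²) ≤ √2 |A|`, and each `|H_α| ≤ |H|`.
-/

open Real

lemma sum_sq_diag_le_sum_sq {ι : Type*} [Fintype ι] (f : ι → ι → ℝ) :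
    ∑ i, f i i ^ 2 ≤ ∑ i, ∑ j, f i j ^ 2 :=
  Finset.sum_le_sum fun i _ =>
    Finset.single_le_sum (f := fun j => f i j ^ 2) (fun _ _ => sq_nonneg _) (Finset.mem_univ i)

lemma abs_sub_le_sqrt_two_mul_sqrt_sq_add_sq (a b : ℝ) : |a - b| ≤ √2 * √(a ^ 2 + b ^ 2) := by
  rw [← sqrt_mul zero_le_two]
  exact abs_le_sqrt (by nlinarith [sq_nonneg (a + b)])

lemma abs_diag_sub_le_sqrt_two_mul_sqrt_sum_sq (h : Fin 2 → Fin 2 → Fin 2 → ℝ) (α : Fin 2) :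
    |h α 0 0 - h α 1 1| ≤ √2 * √(∑ β, ∑ i, ∑ j, h β i j ^ 2) := by
  refine (abs_sub_le_sqrt_two_mul_sqrt_sq_add_sq _ _).trans
    (mul_le_mul_of_nonneg_left (sqrt_le_sqrt ?_) (sqrt_nonneg 2))
  calc h α 0 0 ^ 2 + h α 1 1 ^ 2 = ∑ i, h α i i ^ 2 := (Fin.sum_univ_two (fun i => h α i i ^ 2)).symm
    _ ≤ ∑ i, ∑ j, h α i j ^ 2 := sum_sq_diag_le_sum_sq (h α)
    _ ≤ ∑ β, ∑ i, ∑ j, h β i j ^ 2 :=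
      Finset.single_le_sum (f := fun β => ∑ i, ∑ j, h β i j ^ 2)
        (fun _ _ => by positivity) (Finset.mem_univ α)

lemma sum_sq_sub_sq_eq_of_lagrangian (h : Fin 2 → Fin 2 → Fin 2 → ℝ)
    (hsymm : ∀ (α : Fin 2) (i j : Fin 2), h α i j = h α j i)
    (hlag : ∀ c : Fin 2, h 0 c 1 = h 1 c 0) :
    ∑ c : Fin 2, (h 0 c 0 ^ 2 - h 1 c 1 ^ 2)
      = (h 0 0 0 - h 0 1 1) * (h 0 0 0 + h 0 1 1)
        + (h 1 0 0 - h 1 1 1) * (h 1 0 0 + h 1 1 1) := by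
  have h₃₂₁ : h 0 1 0 = h 1 0 0 := by rw [hsymm, hlag 0]
  have h₄₁₂ : h 1 0 1 = h 0 1 1 := by rw [hsymm 1 0 1, ← hlag 1]
  rw [Fin.sum_univ_two, h₃₂₁, h₄₁₂]
  ring

lemma abs_le_sqrt_sq_add_sq (x : Fin 2 → ℝ) (α : Fin 2) : |x α| ≤ √(x 0 ^ 2 + x 1 ^ 2) := by
  refine abs_le_sqrt ?_
  fin_cases α <;> simp [sq_nonneg]

/-- For second-fundamental-form coefficients `h α i j` of a Lagrangian
surface (indices `α = 0,1` standing for `3,4`, and `i, j = 0,1` standing for `1,2`),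
symmetric in the last two indices and with the Lagrangian symmetry `h_{3c2} = h_{4c1}`,
one has `∑_c (h_{3c1}² − h_{4c2}²) = (h_{311}−h_{322})H₃ + (h_{411}−h_{422})H₄`, whence
`|∑_c (h_{3c1}² − h_{4c2}²)| ≤ |h_{311}−h_{322}||H₃| + |h_{411}−h_{422}||H₄|
  ≤ 2√2 |A| |H|`. -/
theorem stmt_8 (h : Fin 2 → Fin 2 → Fin 2 → ℝ)
    (hsymm : ∀ (α : Fin 2) (i j : Fin 2), h α i j = h α j i)
    (hlag : ∀ c : Fin 2, h 0 c 1 = h 1 c 0)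
    (H : Fin 2 → ℝ) (hH : ∀ α, H α = h α 0 0 + h α 1 1)
    (normA normH : ℝ)
    (hnormA : normA = Real.sqrt (∑ α : Fin 2, ∑ i : Fin 2, ∑ j : Fin 2, (h α i j) ^ 2))
    (hnormH : normH = Real.sqrt (H 0 ^ 2 + H 1 ^ 2)) :
    (∑ c : Fin 2, ((h 0 c 0) ^ 2 - (h 1 c 1) ^ 2)
      = (h 0 0 0 - h 0 1 1) * H 0 + (h 1 0 0 - h 1 1 1) * H 1) ∧
    |∑ c : Fin 2, ((h 0 c 0) ^ 2 - (h 1 c 1) ^ 2)|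
      ≤ |h 0 0 0 - h 0 1 1| * |H 0| + |h 1 0 0 - h 1 1 1| * |H 1| ∧
    |h 0 0 0 - h 0 1 1| * |H 0| + |h 1 0 0 - h 1 1 1| * |H 1|
      ≤ 2 * Real.sqrt 2 * normA * normH := by
  have key : ∑ c : Fin 2, ((h 0 c 0) ^ 2 - (h 1 c 1) ^ 2)
      = (h 0 0 0 - h 0 1 1) * H 0 + (h 1 0 0 - h 1 1 1) * H 1 := by
    rw [hH, hH]
    exact sum_sq_sub_sq_eq_of_lagrangian h hsymm hlag
  have hdiag (α : Fin 2) : |h α 0 0 - h α 1 1| ≤ √2 * normA :=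
    hnormA ▸ abs_diag_sub_le_sqrt_two_mul_sqrt_sum_sq h α
  have hmean (α : Fin 2) : |H α| ≤ normH := hnormH ▸ abs_le_sqrt_sq_add_sq H α
  have hnormA_nonneg : 0 ≤ √2 * normA := (abs_nonneg _).trans (hdiag 0)
  refine ⟨key, ?_, ?_⟩
  · rw [key, ← abs_mul, ← abs_mul]
    exact abs_add_le _ _
  · calc |h 0 0 0 - h 0 1 1| * |H 0| + |h 1 0 0 - h 1 1 1| * |H 1|
        ≤ √2 * normA * normH + √2 * normA * normH :=
          add_le_add (mul_le_mul (hdiag 0) (hmean 0) (abs_nonneg _) hnormA_nonneg)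
            (mul_le_mul (hdiag 1) (hmean 1) (abs_nonneg _) hnormA_nonneg)
      _ = 2 * √2 * normA * normH := by ring
end

section
/- Let a, b > 0 be real constants and let u : [0, ∞) → ℝ be continuous on [0, ∞), differentiable on (0, ∞), with u(t) ≥ 0 for all t, and suppose u satisfies the differential inequality u′(t) ≤ ( −a·u(t) + b/t ) · u(t) for all t > 0. Then u(t) ≤ (b+1)/(a·t) for all t > 0. In particular, the function w(t) = (b+1)/(a·t) is an exact solution of w′ = (−a·w + b/t)·w on (0, ∞), and t·u(t) ≤ (b+1)/a is bounded. -/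
/-!
The barrier `k / t` is a strict supersolution of `w' = (-a w + b / t) w` as soon as `a k > b + 1`,
so a solution of the differential inequality that starts below it stays below it. A solution that
is bounded near `t = 0` lies below every such barrier at small times, because `k / t → ∞` there.
Letting `k` decrease to `(b + 1) / a`, the critical value at which `k / t` is an exact solution,
gives `t u(t) ≤ (b + 1) / a`.
-/

open Filter Topology Set

theorem hasDerivAt_const_div {k t : ℝ} (ht : t ≠ 0) :
    HasDerivAt (fun s => k / s) (-k / t ^ 2) t := by
  simpa [div_eq_mul_inv, neg_div] using (hasDerivAt_inv ht).const_mul k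

theorem eventually_le_const_div_nhdsGT {u : ℝ → ℝ} (hu : ContinuousWithinAt u (Ioi 0) 0)
    {c : ℝ} (hc : 0 < c) : ∀ᶠ t in 𝓝[>] 0, u t ≤ c / t := by
  have hu_lt : ∀ᶠ t in 𝓝[>] 0, u t < u 0 + 1 := hu.eventually (gt_mem_nhds (lt_add_one _))
  have hc_gt : ∀ᶠ t in 𝓝[>] 0, u 0 + 1 < c / t := by
    simpa only [div_eq_mul_inv] using
      (tendsto_inv_nhdsGT_zero.const_mul_atTop hc).eventually_gt_atTop (u 0 + 1)
  filter_upwards [hu_lt, hc_gt] with t h₁ h₂ using (h₁.trans h₂).le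

section Riccati

variable {a b k : ℝ}

theorem riccati_rhs_const_div_lt (hk : 0 < k) (hak : b + 1 < a * k) {t : ℝ} (ht : 0 < t) :
    (-a * (k / t) + b / t) * (k / t) < -k / t ^ 2 := by
  have hrhs : (-a * (k / t) + b / t) * (k / t) = (b - a * k) * k / t ^ 2 := by
    field_simp
    ring
  rw [hrhs]
  gcongr
  nlinarith

theorem le_const_div_of_riccati {u : ℝ → ℝ} (hk : 0 < k) (hak : b + 1 < a * k) {t₀ t₁ : ℝ}
    (ht₀ : 0 < t₀) (hdiff : ∀ t ∈ Icc t₀ t₁, DifferentiableAt ℝ u t)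
    (hineq : ∀ t ∈ Ico t₀ t₁, deriv u t ≤ (-a * u t + b / t) * u t)
    (hstart : u t₀ ≤ k / t₀) : ∀ t ∈ Icc t₀ t₁, u t ≤ k / t := by
  have hpos : ∀ t ∈ Icc t₀ t₁, 0 < t := fun t ht => ht₀.trans_le ht.1
  refine image_le_of_deriv_right_lt_deriv_boundary'
    (fun t ht => (hdiff t ht).continuousAt.continuousWithinAt)
    (fun t ht => (hdiff t (Ico_subset_Icc_self ht)).hasDerivAt.hasDerivWithinAt) hstart
    (fun t ht => (hasDerivAt_const_div (hpos t ht).ne').continuousAt.continuousWithinAt)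
    (fun t ht => (hasDerivAt_const_div (hpos t (Ico_subset_Icc_self ht)).ne').hasDerivWithinAt) ?_
  intro t ht hut
  calc deriv u t ≤ (-a * u t + b / t) * u t := hineq t ht
    _ < -k / t ^ 2 := hut ▸ riccati_rhs_const_div_lt hk hak (hpos t (Ico_subset_Icc_self ht))

theorem mul_le_of_riccati (ha : 0 < a) (hb : -1 < b) {u : ℝ → ℝ}
    (hu₀ : ContinuousWithinAt u (Ioi 0) 0) (hdiff : ∀ t, 0 < t → DifferentiableAt ℝ u t)
    (hineq : ∀ t, 0 < t → deriv u t ≤ (-a * u t + b / t) * u t) {t : ℝ} (ht : 0 < t) :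
    t * u t ≤ (b + 1) / a := by
  have hc : 0 < (b + 1) / a := div_pos (by linarith) ha
  obtain ⟨t₀, hstart, ht₀, ht₀t⟩ :=
    ((eventually_le_const_div_nhdsGT hu₀ hc).and (Ioo_mem_nhdsGT ht)).exists
  refine le_of_forall_pos_le_add fun ε hε => ?_
  have hak : b + 1 < a * ((b + 1) / a + ε) := by
    rw [mul_add, mul_div_cancel₀ _ ha.ne']
    linarith [mul_pos ha hε]
  have hbarrier := le_const_div_of_riccati (by positivity) hak ht₀
    (fun s hs => hdiff s (ht₀.trans_le hs.1)) (fun s hs => hineq s (ht₀.trans_le hs.1))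
    (hstart.trans (by gcongr; linarith)) t ⟨ht₀t.le, le_rfl⟩
  exact (le_div_iff₀' ht).1 hbarrier

end Riccati

theorem stmt_9_general (a b : ℝ) (ha : 0 < a) (hb : 0 < b)
    (u : ℝ → ℝ)
    (hcont : ContinuousOn u (Set.Ici (0 : ℝ)))
    (hdiff : ∀ t : ℝ, 0 < t → DifferentiableAt ℝ u t)
    (hineq : ∀ t : ℝ, 0 < t → deriv u t ≤ (-a * u t + b / t) * u t) :
    (∀ t : ℝ, 0 < t → u t ≤ (b + 1) / (a * t)) ∧
    (∀ t : ℝ, 0 < t →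
      deriv (fun s : ℝ => (b + 1) / (a * s)) t
        = (-a * ((b + 1) / (a * t)) + b / t) * ((b + 1) / (a * t))) ∧
    (∀ t : ℝ, 0 < t → t * u t ≤ (b + 1) / a) := by
  have hu₀ : ContinuousWithinAt u (Ioi 0) 0 :=
    (hcont 0 self_mem_Ici).mono Ioi_subset_Ici_self
  have hbound : ∀ t : ℝ, 0 < t → t * u t ≤ (b + 1) / a := fun t ht =>
    mul_le_of_riccati ha (by linarith) hu₀ hdiff hineq ht
  refine ⟨fun t ht => ?_, fun t ht => ?_, hbound⟩
  · rw [← div_div, le_div_iff₀' ht]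
    exact hbound t ht
  · simp_rw [← div_div]
    rw [(hasDerivAt_const_div ht.ne').deriv]
    field_simp
    ring

/-- ODE comparison: if `u ≥ 0` is continuous on `[0,∞)`, differentiable
on `(0,∞)` and satisfies `u' ≤ (−a u + b/t) u` for `t > 0` (with `a, b > 0`), then
`u t ≤ (b+1)/(a t)` for all `t > 0`; moreover `w t = (b+1)/(a t)` is an exact solution
of `w' = (−a w + b/t) w` on `(0,∞)`, and `t * u t ≤ (b+1)/a` is bounded. -/
theorem stmt_9 (a b : ℝ) (ha : 0 < a) (hb : 0 < b)
    (u : ℝ → ℝ)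
    (hcont : ContinuousOn u (Set.Ici (0 : ℝ)))
    (hdiff : ∀ t : ℝ, 0 < t → DifferentiableAt ℝ u t)
    (hnonneg : ∀ t : ℝ, 0 ≤ t → 0 ≤ u t)
    (hineq : ∀ t : ℝ, 0 < t → deriv u t ≤ (-a * u t + b / t) * u t) :
    (∀ t : ℝ, 0 < t → u t ≤ (b + 1) / (a * t)) ∧
    (∀ t : ℝ, 0 < t →
      deriv (fun s : ℝ => (b + 1) / (a * s)) t
        = (-a * ((b + 1) / (a * t)) + b / t) * ((b + 1) / (a * t))) ∧
    (∀ t : ℝ, 0 < t → t * u t ≤ (b + 1) / a) :=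
  stmt_9_general a b ha hb u hcont hdiff hineq
end
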